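/- Let T be a tree of order n ≥ 4 with metric dimension ε(T). Then the first Zagreb index satisfies M₁(T) ≤ n + (n−1)(n−2) + ε(T), with equality when T is the star S_n. -/

import Mathlib

open scoped Classical

/-- Degree of a vertex. -/
noncomputable def deg {V : Type*} [Fintype V] (G : SimpleGraph V) (v : V) : ℕ :=
  (Finset.univ.filter (fun u => G.Adj v u)).card

/-- First Zagreb index: sum of squares of degrees. -/
noncomputable def M1 {V : Type*} [Fintype V] (G : SimpleGraph V) : ℕ :=
  ∑ v, (deg G v) ^ 2

/-- Second Zagreb index: sum over edges of products of endpoint degrees. -/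
noncomputable def M2 {V : Type*} [Fintype V] (G : SimpleGraph V) : ℕ :=
  ∑ e ∈ G.edgeFinset,
    Sym2.lift ⟨fun u v => deg G u * deg G v, fun u v => Nat.mul_comm _ _⟩ e

/-- Atom-bond connectivity index. -/
noncomputable def ABC {V : Type*} [Fintype V] (G : SimpleGraph V) : ℝ :=
  ∑ e ∈ G.edgeFinset,
    Sym2.lift ⟨fun u v =>
      Real.sqrt (((deg G u : ℝ) + (deg G v : ℝ) - 2) / ((deg G u : ℝ) * (deg G v : ℝ))),
      fun u v => by dsimp only; rw [add_comm ((deg G u : ℝ)), mul_comm ((deg G u : ℝ))]⟩ e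

/-- A set of vertices is resolving if every pair of distinct vertices is
distinguished by its distance to some member of the set. -/
def IsResolving {V : Type*} [Fintype V] (G : SimpleGraph V) (S : Finset V) : Prop :=
  ∀ u v : V, u ≠ v → ∃ s ∈ S, G.dist u s ≠ G.dist v s

/-- The metric dimension: minimum size of a resolving set. -/
noncomputable def metricDim {V : Type*} [Fintype V] (G : SimpleGraph V) : ℕ :=
  sInf {k | ∃ S : Finset V, IsResolving G S ∧ S.card = k}

/-- The star graph on `n` vertices: vertex `0` is adjacent to all others. -/
def starGraph (n : ℕ) : SimpleGraph (Fin n) where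
  Adj u v := u ≠ v ∧ (u.val = 0 ∨ v.val = 0)
  symm := ⟨by intro u v h; exact ⟨h.1.symm, h.2.symm⟩⟩
  loopless := ⟨fun v h => h.1 rfl⟩

/-!
A vertex of degree `n - 1` forces the tree to be the star. Otherwise every degree `d` satisfies
`1 ≤ d ≤ n - 2`, hence `d² ≤ d + (n - 2)(d - 1)`, and summing with `∑ d = 2(n - 1)` gives
`M₁ ≤ n + (n - 1)(n - 2)`. For the star, `M₁ = n(n - 1)` and `ε = n - 2`: the leaves are pairwise
twins (no third vertex tells two of them apart), so a resolving set misses at most one of them,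
and all leaves but one do resolve.
-/

open Finset

lemma M1_eq_sum_degree_sq {V : Type*} [Fintype V] (G : SimpleGraph V) :
    M1 G = ∑ v, G.degree v ^ 2 := by
  simp only [M1, deg, SimpleGraph.degree, SimpleGraph.neighborFinset_eq_filter]

section MetricDimension

variable {V : Type*} [Fintype V] {G : SimpleGraph V} {S : Finset V}

lemma metricDim_le_card (hS : IsResolving G S) : metricDim G ≤ S.card :=
  Nat.sInf_le ⟨S, hS, rfl⟩

lemma exists_isResolving_card_eq_metricDim (hS : IsResolving G S) :
    ∃ S' : Finset V, IsResolving G S' ∧ S'.card = metricDim G :=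
  Nat.sInf_mem (s := {k | ∃ S : Finset V, IsResolving G S ∧ S.card = k}) ⟨S.card, S, hS, rfl⟩

lemma IsResolving.mem_or_mem_of_twins (hS : IsResolving G S) {u v : V} (huv : u ≠ v)
    (htwin : ∀ s, s ≠ u → s ≠ v → G.dist u s = G.dist v s) : u ∈ S ∨ v ∈ S := by
  by_contra! h
  obtain ⟨s, hs, hne⟩ := hS u v huv
  exact hne (htwin s (fun hsu => h.1 (hsu ▸ hs)) (fun hsv => h.2 (hsv ▸ hs)))

end MetricDimension

lemma starGraph_isUniversal_zero {n : ℕ} (hn : 0 < n) : (starGraph n).IsUniversal ⟨0, hn⟩ :=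
  fun _ hw => ⟨hw, Or.inl rfl⟩

namespace SimpleGraph

variable {V : Type*}

section Star

variable {T : SimpleGraph V} {c u v : V}

lemma IsAcyclic.not_adj_of_isUniversal (hT : T.IsAcyclic) (hc : T.IsUniversal c)
    (hu : u ≠ c) (hv : v ≠ c) : ¬ T.Adj u v := fun huv =>
  hT.cliqueFree le_rfl {c, u, v}
    (is3Clique_triple_iff.mpr ⟨hc hu.symm, hc hv.symm, huv⟩)

lemma dist_eq_one_of_isUniversal (hc : T.IsUniversal c) (hu : u ≠ c) : T.dist u c = 1 :=
  dist_eq_one_iff_adj.mpr (hc hu.symm).symm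

lemma IsAcyclic.dist_eq_two_of_isUniversal (hT : T.IsAcyclic) (hc : T.IsUniversal c)
    (hu : u ≠ c) (hv : v ≠ c) (huv : u ≠ v) : T.dist u v = 2 := by
  let p : T.Walk u v := .cons (hc hu.symm).symm (.cons (hc hv.symm) .nil)
  have hle : T.dist u v ≤ 2 := dist_le p
  have h0 : T.dist u v ≠ 0 := dist_ne_zero_iff_ne_and_reachable.mpr ⟨huv, p.reachable⟩
  have h1 : T.dist u v ≠ 1 := fun h =>
    hT.not_adj_of_isUniversal hc hu hv (dist_eq_one_iff_adj.mp h)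
  omega

variable [Fintype V]

lemma IsAcyclic.degree_eq_one_of_isUniversal (hT : T.IsAcyclic) (hc : T.IsUniversal c)
    (hu : u ≠ c) : T.degree u = 1 := by
  rw [← card_neighborFinset_eq_degree, card_eq_one]
  refine ⟨c, eq_singleton_iff_unique_mem.mpr ⟨(mem_neighborFinset ..).mpr (hc hu.symm).symm,
    fun w hw => ?_⟩⟩
  by_contra hwc
  exact hT.not_adj_of_isUniversal hc hu hwc ((mem_neighborFinset ..).mp hw)

lemma IsAcyclic.sum_degree_sq_of_isUniversal (hT : T.IsAcyclic) (hc : T.IsUniversal c) :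
    ∑ v, T.degree v ^ 2 = Fintype.card V * (Fintype.card V - 1) := by
  have hleaves : ∑ v ∈ univ.erase c, T.degree v ^ 2 = Fintype.card V - 1 := by
    rw [sum_congr rfl fun v hv => by
        rw [hT.degree_eq_one_of_isUniversal hc (ne_of_mem_erase hv), one_pow],
      sum_const, card_erase_of_mem (mem_univ c), card_univ, smul_eq_mul, mul_one]
  rw [← add_sum_erase _ _ (mem_univ c), hleaves, (degree_eq_card_sub_one T c).mpr hc]
  zify [Fintype.card_pos_iff.mpr ⟨c⟩]
  ring

lemma IsAcyclic.card_sub_two_le_card_of_isUniversal (hT : T.IsAcyclic) (hc : T.IsUniversal c)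
    {S : Finset V} (hS : IsResolving T S) : Fintype.card V - 2 ≤ S.card := by
  have hleaves : (Sᶜ.erase c).card ≤ 1 := by
    refine card_le_one.mpr fun u hu v hv => ?_
    by_contra huv
    have hu' := ne_of_mem_erase hu
    have hv' := ne_of_mem_erase hv
    refine (hS.mem_or_mem_of_twins huv fun s hsu hsv => ?_).elim
      (mem_compl.mp (mem_of_mem_erase hu)) (mem_compl.mp (mem_of_mem_erase hv))
    by_cases hsc : s = c
    · rw [hsc, dist_eq_one_of_isUniversal hc hu', dist_eq_one_of_isUniversal hc hv']
    · rw [hT.dist_eq_two_of_isUniversal hc hu' hsc hsu.symm,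
        hT.dist_eq_two_of_isUniversal hc hv' hsc hsv.symm]
  have := pred_card_le_card_erase (s := Sᶜ) (a := c)
  have := card_compl_add_card S
  omega

/-- Each leaf in the set separates itself from every other vertex, and any of them separates
`c` (at distance 1) from `u₀` (at distance 2). -/
lemma IsAcyclic.isResolving_of_isUniversal (hT : T.IsAcyclic) (hc : T.IsUniversal c)
    (hcard : 3 ≤ Fintype.card V) {u₀ : V} (hu₀ : u₀ ≠ c) :
    IsResolving T ((univ.erase c).erase u₀) := by
  set S := (univ.erase c).erase u₀
  have hmem {x} : x ∈ S ↔ x ≠ u₀ ∧ x ≠ c := by simp [S]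
  have hdist_ne {x y : V} (hxy : x ≠ y) : T.dist x y ≠ 0 :=
    dist_ne_zero_iff_ne_and_reachable.mpr ⟨hxy, (Connected.of_isUniversal hc).preconnected x y⟩
  intro u v huv
  by_cases hu : u ∈ S
  · exact ⟨u, hu, by rw [dist_self]; exact (hdist_ne huv.symm).symm⟩
  by_cases hv : v ∈ S
  · exact ⟨v, hv, by rw [dist_self]; exact hdist_ne huv⟩
  obtain ⟨s, hs⟩ : S.Nonempty := by
    rw [← card_pos, card_erase_of_mem (mem_erase.mpr ⟨hu₀, mem_univ _⟩),
      card_erase_of_mem (mem_univ c), card_univ]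
    omega
  obtain ⟨hsu₀, hsc⟩ := hmem.mp hs
  have hu₀s : T.dist u₀ s = 2 := hT.dist_eq_two_of_isUniversal hc hu₀ hsc hsu₀.symm
  have hcs : T.dist c s = 1 := by rw [dist_comm]; exact dist_eq_one_of_isUniversal hc hsc
  refine ⟨s, hs, ?_⟩
  rw [hmem] at hu hv
  grind

lemma IsAcyclic.metricDim_of_isUniversal (hT : T.IsAcyclic) (hc : T.IsUniversal c)
    (hcard : 3 ≤ Fintype.card V) : metricDim T = Fintype.card V - 2 := by
  have : Nontrivial V := Fintype.one_lt_card_iff_nontrivial.mp (by omega)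
  obtain ⟨u₀, hu₀⟩ := exists_ne c
  have hres := hT.isResolving_of_isUniversal hc hcard hu₀
  have hcard₀ : ((univ.erase c).erase u₀).card = Fintype.card V - 2 := by
    rw [card_erase_of_mem (mem_erase.mpr ⟨hu₀, mem_univ _⟩), card_erase_of_mem (mem_univ c),
      card_univ]
    rfl
  obtain ⟨S, hS, hS_card⟩ := exists_isResolving_card_eq_metricDim hres
  exact le_antisymm (hcard₀ ▸ metricDim_le_card hres)
    (hS_card ▸ hT.card_sub_two_le_card_of_isUniversal hc hS)

end Star

lemma IsTree.sum_degree_sq_le [Fintype V] {G : SimpleGraph V} (hT : G.IsTree)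
    (hcard : 2 ≤ Fintype.card V) {D : ℕ} (hD : ∀ v, G.degree v ≤ D) :
    ∑ v, G.degree v ^ 2 ≤ 2 * (Fintype.card V - 1) + D * (Fintype.card V - 2) := by
  have : Nontrivial V := Fintype.one_lt_card_iff_nontrivial.mp hcard
  have hpos v : 1 ≤ G.degree v := hT.connected.preconnected.degree_pos_of_nontrivial v
  have hsum : ∑ v, G.degree v = 2 * (Fintype.card V - 1) := by
    rw [sum_degrees_eq_twice_card_edges, ← hT.card_edgeFinset, Nat.add_sub_cancel]
  have hsum_pred : ∑ v, (G.degree v - 1) = Fintype.card V - 2 := by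
    rw [sum_tsub_distrib _ fun v _ => hpos v, hsum, sum_const, card_univ, smul_eq_mul, mul_one]
    omega
  calc ∑ v, G.degree v ^ 2
      ≤ ∑ v, (G.degree v + D * (G.degree v - 1)) := sum_le_sum fun v _ => by
        obtain ⟨d, hd⟩ := Nat.exists_eq_add_of_le (hpos v)
        rw [hd, Nat.add_sub_cancel_left, sq]
        nlinarith [hD v]
    _ = 2 * (Fintype.card V - 1) + D * (Fintype.card V - 2) := by
        rw [sum_add_distrib, ← mul_sum, hsum, hsum_pred]

lemma Iso.isUniversal_apply {W : Type*} {G : SimpleGraph V} {H : SimpleGraph W} (φ : G ≃g H)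
    {v : V} (hv : G.IsUniversal v) : H.IsUniversal (φ v) := fun w hw => by
  rw [← φ.apply_symm_apply w, φ.map_adj_iff]
  exact hv fun h => hw (by rw [h, φ.apply_symm_apply])

end SimpleGraph

theorem stmt13 {V : Type*} [Fintype V] (T : SimpleGraph V) (hT : T.IsTree)
    (hn : 4 ≤ Fintype.card V) :
    M1 T ≤ Fintype.card V + (Fintype.card V - 1) * (Fintype.card V - 2) + metricDim T ∧
      (Nonempty (T ≃g starGraph (Fintype.card V)) →
        M1 T = Fintype.card V + (Fintype.card V - 1) * (Fintype.card V - 2) + metricDim T) := by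
  by_cases hstar : ∃ c, T.IsUniversal c
  · obtain ⟨c, hc⟩ := hstar
    have hM1 : M1 T = Fintype.card V + (Fintype.card V - 1) * (Fintype.card V - 2)
        + metricDim T := by
      rw [M1_eq_sum_degree_sq, hT.isAcyclic.sum_degree_sq_of_isUniversal hc,
        hT.isAcyclic.metricDim_of_isUniversal hc (by omega)]
      zify [show 2 ≤ Fintype.card V by omega, show 1 ≤ Fintype.card V by omega]
      ring
    exact ⟨hM1.le, fun _ => hM1⟩
  simp only [not_exists] at hstar
  refine ⟨?_, fun ⟨φ⟩ =>
    (hstar _ (φ.symm.isUniversal_apply (starGraph_isUniversal_zero (by omega)))).elim⟩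
  have hdeg v : T.degree v ≤ Fintype.card V - 2 :=
    Nat.le_sub_one_of_lt ((T.degree_lt_card_sub_one v).mpr (hstar v))
  have := hT.sum_degree_sq_le (by omega) hdeg
  rw [M1_eq_sum_degree_sq]
  zify [show 2 ≤ Fintype.card V by omega, show 1 ≤ Fintype.card V by omega] at this ⊢
  linarith
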